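/- Let H be a subgroup of GL_N(R) containing Λ^m E_n(R), and for distinct I, J ∈ Λ^m[n] set A_{I,J} = {ξ ∈ R : t_{I,J}(ξ) ∈ H}. Then each A_{I,J} is an ideal of R. -/

import Mathlib

open Matrix

/-- Index type: `m`-element subsets of `{1,…,n}`. -/
abbrev ExtIdx (n m : ℕ) := {s : Finset (Fin n) // s.card = m}

/-- The `m`-th exterior power of a matrix: the matrix of its `m × m` minors,
rows and columns indexed by `m`-element subsets in increasing order. -/
def extPow (R : Type) [CommRing R] (n m : ℕ) (g : Matrix (Fin n) (Fin n) R) :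
    Matrix (ExtIdx n m) (ExtIdx n m) R :=
  Matrix.of fun I J =>
    (Matrix.of fun a b : Fin m =>
      g (I.1.orderIsoOfFin I.2 a) (J.1.orderIsoOfFin J.2 b)).det

/-- An elementary transvection `e + ξ e_{i,j}` as an element of `GL`. -/
def tGL (R : Type) [CommRing R] {ι : Type} [Fintype ι] [DecidableEq ι]
    (i j : ι) (hij : i ≠ j) (ξ : R) : GL ι R where
  val := Matrix.transvection i j ξ
  inv := Matrix.transvection i j (-ξ)
  val_inv := by
    rw [Matrix.transvection_mul_transvection_same i j hij]; simp
  inv_val := by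
    rw [Matrix.transvection_mul_transvection_same i j hij]; simp

/-- The elementary group `E(R)` generated by all elementary transvections. -/
def elemGL (R : Type) [CommRing R] (ι : Type) [Fintype ι] [DecidableEq ι] :
    Subgroup (GL ι R) :=
  Subgroup.closure {x | ∃ i j, ∃ hij : i ≠ j, ∃ ξ : R, x = tGL R i j hij ξ}

/-- `E(A)`: the subgroup generated by elementary transvections with parameter in `A`. -/
def elemGLIdeal (R : Type) [CommRing R] (ι : Type) [Fintype ι] [DecidableEq ι]
    (A : Ideal R) : Subgroup (GL ι R) :=
  Subgroup.closure {x | ∃ i j, ∃ hij : i ≠ j, ∃ ξ : R, ξ ∈ A ∧ x = tGL R i j hij ξ}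

/-- The smallest subgroup containing `K` and normalized by `H`:
the normal closure of `K` under conjugation by `H`. -/
def conjClosureBy {G : Type*} [Group G] (K H : Subgroup G) : Subgroup G :=
  Subgroup.closure {x | ∃ h ∈ H, ∃ y ∈ K, x = h * y * h⁻¹}

/-- The relative elementary subgroup `E(R, A) = E(A)^{E(R)}`. -/
def relElem (R : Type) [CommRing R] (ι : Type) [Fintype ι] [DecidableEq ι]
    (A : Ideal R) : Subgroup (GL ι R) :=
  conjClosureBy (elemGLIdeal R ι A) (elemGL R ι)

/-- `Λ^m E_n(R)`: the exterior power of the elementary group, the subgroup of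
`GL_N(R)` generated by the exterior powers of elementary transvections. -/
def extElem (R : Type) [CommRing R] (n m : ℕ) : Subgroup (GL (ExtIdx n m) R) :=
  Subgroup.closure {x | ∃ i j, ∃ _ : i ≠ j, ∃ ξ : R,
    (x : Matrix (ExtIdx n m) (ExtIdx n m) R) = extPow R n m (Matrix.transvection i j ξ)}

/-- `sign(L, i)`: the sign of the permutation sorting the list `(L, i)`. -/
def signLI (R : Type) [CommRing R] {n : ℕ} (L : Finset (Fin n)) (i : Fin n) : R :=
  (-1 : R) ^ (L.filter fun l => i < l).card

/-- Replacing the element `i ∈ I` by `j ∉ I` in an `m`-element subset. -/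
def swapIdx {n m : ℕ} (I : ExtIdx n m) (i j : Fin n) (hi : i ∈ I.1) (hj : j ∉ I.1) :
    ExtIdx n m :=
  ⟨insert j (I.1.erase i), by
    have h1 : j ∉ I.1.erase i := fun h => hj (Finset.mem_of_mem_erase h)
    have h2 : 1 ≤ m := I.2 ▸ Finset.card_pos.mpr ⟨i, hi⟩
    rw [Finset.card_insert_of_notMem h1, Finset.card_erase_of_mem hi, I.2]
    omega⟩

/-- Reduction of `GL` along a ring homomorphism. -/
def glMap {ι : Type} [Fintype ι] [DecidableEq ι] {S S' : Type} [CommRing S] [CommRing S']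
    (f : S →+* S') : GL ι S →* GL ι S' :=
  Units.map (RingHom.mapMatrix f).toMonoidHom

/-!
Closure of `{ξ | t_{I,J}(ξ) ∈ H}` under addition and `0` is `t(x) t(y) = t(x + y)`; the point is
closure under multiplication by `c ∈ R`. Pick `b ∈ I \ J` and `a ∉ I ∪ J` (possible since `n > 2m`),
and let `I' = I - b + a`. Only the column of `b` of `t_{a,b}(λ)` depends on `λ`, so every minor of
`t_{a,b}(λ)` is affine in `λ` and `Λ^m t_{a,b}(λ) = 1 + λ N`. A minor with a zero row or column
vanishes, which confines `N_{X,L} ≠ 0` to `L \ X = {b}`, `X \ L = {a}`; hence `N² = 0`,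
`e_{I,J} N = 0` (as `a ∉ J`), and `N e_{I,J} = ε e_{I',J}` where `ε = N_{I',I}` is the determinant
of a permutation matrix, a unit. Then `t_{I,J}(-ξ) · Λ^m t_{a,b}(λ) t_{I,J}(ξ) Λ^m t_{a,b}(-λ)`
equals `t_{I',J}(ελξ)`, so `t_{I',J}(c ξ) ∈ H` for all `c`; going back with `(b, a)` in place of
`(a, b)` gives `t_{I,J}(c ξ) ∈ H`.
-/

open Finset

section tGL

variable {R : Type} [CommRing R] {ι : Type} [Fintype ι] [DecidableEq ι]

lemma tGL_add (i j : ι) (hij : i ≠ j) (x y : R) :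
    tGL R i j hij (x + y) = tGL R i j hij x * tGL R i j hij y :=
  Units.ext (transvection_mul_transvection_same i j hij x y).symm

lemma tGL_zero (i j : ι) (hij : i ≠ j) : tGL R i j hij 0 = 1 :=
  Units.ext (transvection_zero i j)

end tGL

namespace ExtIdx

variable {n m : ℕ}

def enum (L : ExtIdx n m) (s : Fin m) : Fin n := L.1.orderIsoOfFin L.2 s

lemma enum_mem (L : ExtIdx n m) (s : Fin m) : L.enum s ∈ L.1 :=
  (L.1.orderIsoOfFin L.2 s).2

lemma enum_injective (L : ExtIdx n m) : Function.Injective L.enum :=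
  fun _ _ h => (L.1.orderIsoOfFin L.2).injective (Subtype.ext h)

lemma exists_enum_eq {L : ExtIdx n m} {l : Fin n} (hl : l ∈ L.1) : ∃ s, L.enum s = l :=
  ⟨(L.1.orderIsoOfFin L.2).symm ⟨l, hl⟩, by simp [enum]⟩

lemma sdiff_nonempty_of_ne {X L : ExtIdx n m} (h : X ≠ L) : (L.1 \ X.1).Nonempty :=
  Finset.sdiff_nonempty.mpr fun hLX =>
    h (Subtype.ext (Finset.eq_of_subset_of_card_le hLX (by rw [X.2, L.2])).symm)

lemma eq_of_sdiff_eq {I X Y : ExtIdx n m} (h₁ : X.1 \ I.1 = Y.1 \ I.1)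
    (h₂ : I.1 \ X.1 = I.1 \ Y.1) : X = Y := by
  ext x
  have h₁ := Finset.ext_iff.mp h₁ x
  have h₂ := Finset.ext_iff.mp h₂ x
  simp only [Finset.mem_sdiff] at h₁ h₂
  tauto

lemma exists_notMem_of_two_mul_lt (h : 2 * m < n) (I J : ExtIdx n m) :
    ∃ a, a ∉ I.1 ∧ a ∉ J.1 := by
  by_contra! hIJ
  have hcard := card_le_card fun a (_ : a ∈ univ) =>
    mem_union.mpr ((em (a ∈ I.1)).imp_right (hIJ a))
  have := card_union_le I.1 J.1
  rw [card_univ, Fintype.card_fin] at hcard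
  rw [I.2, J.2] at this
  omega

end ExtIdx

lemma sdiff_swapIdx {n m : ℕ} {I : ExtIdx n m} {i j : Fin n} (hi : i ∈ I.1) (hj : j ∉ I.1) :
    I.1 \ (swapIdx I i j hi hj).1 = {i} ∧ (swapIdx I i j hi hj).1 \ I.1 = {j} := by
  constructor <;> ext x <;> simp only [swapIdx, mem_sdiff, mem_insert, mem_erase, mem_singleton] <;>
    grind

section ExtPow

variable {R : Type} [CommRing R] {n m : ℕ}

lemma extPow_apply (g : Matrix (Fin n) (Fin n) R) (X L : ExtIdx n m) :
    extPow R n m g X L = (g.submatrix X.enum L.enum).det := rfl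

lemma extPow_apply_eq_zero_of_col {g : Matrix (Fin n) (Fin n) R} {X L : ExtIdx n m} {l : Fin n}
    (hl : l ∈ L.1) (h : ∀ x ∈ X.1, g x l = 0) : extPow R n m g X L = 0 := by
  obtain ⟨s, rfl⟩ := ExtIdx.exists_enum_eq hl
  exact det_eq_zero_of_column_eq_zero s fun r => h _ (X.enum_mem r)

lemma extPow_apply_eq_zero_of_row {g : Matrix (Fin n) (Fin n) R} {X L : ExtIdx n m} {x : Fin n}
    (hx : x ∈ X.1) (h : ∀ l ∈ L.1, g x l = 0) : extPow R n m g X L = 0 := by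
  obtain ⟨r, rfl⟩ := ExtIdx.exists_enum_eq hx
  exact det_eq_zero_of_row_eq_zero r fun s => h _ (L.enum_mem s)

lemma extPow_one : extPow R n m 1 = 1 := by
  ext X L
  rcases eq_or_ne X L with rfl | hXL
  · rw [extPow_apply, submatrix_one _ X.enum_injective, det_one, one_apply_eq]
  · obtain ⟨l, hl⟩ := ExtIdx.sdiff_nonempty_of_ne hXL
    rw [Finset.mem_sdiff] at hl
    rw [one_apply_ne hXL]
    exact extPow_apply_eq_zero_of_col hl.1 fun x hx => one_apply_ne (by rintro rfl; exact hl.2 hx)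

lemma transvection_apply (a b x y : Fin n) (c : R) :
    transvection a b c x y = (1 : Matrix (Fin n) (Fin n) R) x y + if a = x ∧ b = y then c else 0 :=
  rfl

end ExtPow

lemma Matrix.det_updateCol_one {ι R : Type*} [Fintype ι] [DecidableEq ι] [CommRing R] (j : ι)
    (u : ι → R) : ((1 : Matrix ι ι R).updateCol j u).det = u j := by
  simpa [one_apply] using det_updateCol_sum (1 : Matrix ι ι R) j u

section Transvection

variable {R : Type} [CommRing R] {n m : ℕ}

lemma extPow_transvection_apply_of_notMem {a b : Fin n} (c : R) (X : ExtIdx n m)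
    {L : ExtIdx n m} (hb : b ∉ L.1) :
    extPow R n m (transvection a b c) X L = extPow R n m 1 X L := by
  rw [extPow_apply, extPow_apply]
  congr 1
  ext r s
  simp only [submatrix_apply, transvection_apply, add_eq_left, ite_eq_right_iff, and_imp]
  rintro - rfl
  exact absurd (L.enum_mem s) hb

lemma extPow_transvection_apply_of_enum_eq (a : Fin n) {b : Fin n} (c : R) (X : ExtIdx n m)
    {L : ExtIdx n m} {s₀ : Fin m} (hs₀ : L.enum s₀ = b) :
    extPow R n m (transvection a b c) X L = extPow R n m 1 X L +
      c * (((1 : Matrix (Fin n) (Fin n) R).submatrix X.enum L.enum).updateCol s₀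
        fun r => if a = X.enum r then 1 else 0).det := by
  set A := (1 : Matrix (Fin n) (Fin n) R).submatrix X.enum L.enum
  have hcol : (transvection a b c).submatrix X.enum L.enum =
      A.updateCol s₀ ((fun r => A r s₀) + c • fun r => if a = X.enum r then 1 else 0) := by
    ext r s
    rw [updateCol_apply, submatrix_apply, transvection_apply]
    rcases eq_or_ne s s₀ with rfl | hs
    · simp [A, hs₀, mul_ite]
    · simp [A, hs, hs₀ ▸ (L.enum_injective.ne hs.symm)]
  rw [extPow_apply, hcol, det_updateCol_add, det_updateCol_smul, updateCol_eq_self]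
  rfl

lemma extPow_transvection_apply_self {a b : Fin n} (hab : a ≠ b) (c : R) (L : ExtIdx n m) :
    extPow R n m (transvection a b c) L L = 1 := by
  by_cases hb : b ∈ L.1
  · obtain ⟨s₀, hs₀⟩ := ExtIdx.exists_enum_eq hb
    rw [extPow_transvection_apply_of_enum_eq a c L hs₀, submatrix_one _ L.enum_injective,
      det_updateCol_one, hs₀, if_neg hab, extPow_one, one_apply_eq, mul_zero, add_zero]
  · rw [extPow_transvection_apply_of_notMem c L hb, extPow_one, one_apply_eq]

/-- The nilpotent part of `Λ^m t_{a,b}(c) = 1 + c • extNil R n m a b`. -/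
def extNil (R : Type) [CommRing R] (n m : ℕ) (a b : Fin n) : Matrix (ExtIdx n m) (ExtIdx n m) R :=
  extPow R n m (transvection a b 1) - 1

lemma extPow_transvection_eq (a b : Fin n) (c : R) :
    extPow R n m (transvection a b c) = 1 + c • extNil R n m a b := by
  ext X L
  simp only [extNil, Matrix.add_apply, Matrix.smul_apply, Matrix.sub_apply, smul_eq_mul]
  by_cases hb : b ∈ L.1
  · obtain ⟨s₀, hs₀⟩ := ExtIdx.exists_enum_eq hb
    rw [extPow_transvection_apply_of_enum_eq a c X hs₀,
      extPow_transvection_apply_of_enum_eq a 1 X hs₀, extPow_one]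
    ring
  · rw [extPow_transvection_apply_of_notMem c X hb, extPow_transvection_apply_of_notMem 1 X hb,
      extPow_one]
    ring

lemma sdiff_eq_of_extNil_apply_ne_zero {a b : Fin n} (hab : a ≠ b) {X L : ExtIdx n m}
    (h : extNil R n m a b X L ≠ 0) : L.1 \ X.1 = {b} ∧ X.1 \ L.1 = {a} := by
  have hXL : X ≠ L := by
    rintro rfl
    simp [extNil, extPow_transvection_apply_self hab] at h
  have hT : extPow R n m (transvection a b 1) X L ≠ 0 := by
    simpa [extNil, one_apply_ne hXL] using h
  constructor
  · refine (ExtIdx.sdiff_nonempty_of_ne hXL).subset_singleton_iff.mp fun l hl => ?_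
    rw [mem_sdiff] at hl
    rw [mem_singleton]
    by_contra hlb
    refine hT (extPow_apply_eq_zero_of_col hl.1 fun x hx => ?_)
    rw [transvection_apply, one_apply_ne (by rintro rfl; exact hl.2 hx),
      if_neg (by rintro ⟨-, rfl⟩; exact hlb rfl), add_zero]
  · refine (ExtIdx.sdiff_nonempty_of_ne hXL.symm).subset_singleton_iff.mp fun x hx => ?_
    rw [mem_sdiff] at hx
    rw [mem_singleton]
    by_contra hxa
    refine hT (extPow_apply_eq_zero_of_row hx.1 fun l hl => ?_)
    rw [transvection_apply, one_apply_ne (by rintro rfl; exact hx.2 hl),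
      if_neg (by rintro ⟨rfl, -⟩; exact hxa rfl), add_zero]

lemma extNil_mul_self {a b : Fin n} (hab : a ≠ b) :
    extNil R n m a b * extNil R n m a b = 0 := by
  ext X Z
  rw [mul_apply, Matrix.zero_apply]
  refine Finset.sum_eq_zero fun Y _ => ?_
  by_contra h
  have hXY := left_ne_zero_of_mul h
  have hYZ := right_ne_zero_of_mul h
  have hbY : b ∈ Y.1 \ X.1 := by
    rw [(sdiff_eq_of_extNil_apply_ne_zero hab hXY).1]; exact mem_singleton_self b
  have hbZ : b ∈ Z.1 \ Y.1 := by
    rw [(sdiff_eq_of_extNil_apply_ne_zero hab hYZ).1]; exact mem_singleton_self b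
  exact (mem_sdiff.mp hbZ).2 (mem_sdiff.mp hbY).1

lemma single_mul_extNil {a b : Fin n} (hab : a ≠ b) (I : ExtIdx n m) {J : ExtIdx n m}
    (haJ : a ∉ J.1) (ξ : R) : single I J ξ * extNil R n m a b = 0 := by
  ext X Z
  rcases eq_or_ne X I with rfl | hX
  · rw [single_mul_apply_same, Matrix.zero_apply]
    by_contra h
    have haJ' : a ∈ J.1 \ Z.1 := by
      rw [(sdiff_eq_of_extNil_apply_ne_zero hab (right_ne_zero_of_mul h)).2]
      exact mem_singleton_self a
    exact haJ (mem_sdiff.mp haJ').1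
  · rw [single_mul_apply_of_ne _ _ _ _ _ hX, Matrix.zero_apply]

lemma extNil_mul_single {a b : Fin n} (hab : a ≠ b) {I I' : ExtIdx n m} (hI : I.1 \ I'.1 = {b})
    (hI' : I'.1 \ I.1 = {a}) (J : ExtIdx n m) (ξ : R) :
    extNil R n m a b * single I J ξ = single I' J (extNil R n m a b I' I * ξ) := by
  ext X Z
  rcases eq_or_ne Z J with rfl | hZ
  · rw [mul_single_apply_same]
    rcases eq_or_ne X I' with rfl | hX
    · rw [single_apply_same]
    · rw [single_apply_of_ne _ _ _ _ _ (fun h => hX h.1.symm)]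
      by_contra h
      obtain ⟨h₁, h₂⟩ := sdiff_eq_of_extNil_apply_ne_zero hab (left_ne_zero_of_mul h)
      exact hX (ExtIdx.eq_of_sdiff_eq (h₂.trans hI'.symm) (h₁.trans hI.symm))
  · rw [mul_single_apply_of_ne _ _ _ _ _ hZ, single_apply_of_ne _ _ _ _ _ (fun h => hZ h.2.symm)]

end Transvection

section Conjugation

variable {R : Type} [CommRing R] {n m : ℕ}

lemma isUnit_extNil_apply {a b : Fin n} {I I' : ExtIdx n m} (hI : I.1 \ I'.1 = {b})
    (hI' : I'.1 \ I.1 = {a}) : IsUnit (extNil R n m a b I' I) := by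
  obtain ⟨hbI, hbI'⟩ := mem_sdiff.mp (hI ▸ mem_singleton_self b)
  obtain ⟨haI', haI⟩ := mem_sdiff.mp (hI' ▸ mem_singleton_self a)
  have hI'I : I' ≠ I := by rintro rfl; exact haI haI'
  have hswap : ∀ x, x ∈ I'.1 ↔ Equiv.swap a b x ∈ I.1 := by
    intro x
    have h₁ := Finset.ext_iff.mp hI x
    have h₂ := Finset.ext_iff.mp hI' x
    simp only [mem_sdiff, mem_singleton] at h₁ h₂
    rcases eq_or_ne x a with rfl | hxa
    · simp [haI', hbI]
    rcases eq_or_ne x b with rfl | hxb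
    · simp [hbI', haI]
    rw [Equiv.swap_apply_of_ne_of_ne hxa hxb]
    tauto
  let σ : Equiv.Perm (Fin m) := (I'.1.orderIsoOfFin I'.2).toEquiv.trans
    (((Equiv.swap a b).subtypeEquiv hswap).trans (I.1.orderIsoOfFin I.2).toEquiv.symm)
  have hσ : ∀ r, I.enum (σ r) = Equiv.swap a b (I'.enum r) := by
    intro r
    simp [σ, ExtIdx.enum]
  have hminor : (transvection a b 1).submatrix I'.enum I.enum =
      (1 : Matrix (Fin m) (Fin m) R).submatrix σ id := by
    ext r s
    have hσrs : σ r = s ↔ Equiv.swap a b (I'.enum r) = I.enum s := by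
      rw [← hσ, I.enum_injective.eq_iff]
    simp only [submatrix_apply, transvection_apply, one_apply, id, hσrs]
    rcases eq_or_ne (I'.enum r) a with hr | hr
    · have hs : a ≠ I.enum s := fun h => haI (h ▸ I.enum_mem s)
      simp [hr, hs]
    · have hrb : I'.enum r ≠ b := fun h => hbI' (h ▸ I'.enum_mem r)
      simp [Equiv.swap_apply_of_ne_of_ne hr hrb, Ne.symm hr]
  rw [extNil, Matrix.sub_apply, one_apply_ne hI'I, sub_zero, extPow_apply, hminor, det_permute,
    det_one, mul_one]
  exact (Equiv.Perm.sign σ).isUnit.map (Int.castRingHom R)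

lemma one_add_smul_mul_one_add_smul {A : Type*} [Ring A] [Algebra R A] {N : A} (hN : N * N = 0)
    (c d : R) : (1 + c • N) * (1 + d • N) = 1 + (c + d) • N := by
  simp only [mul_add, add_mul, one_mul, mul_one, smul_mul_smul, hN, smul_zero]
  module

def extTransvection (R : Type) [CommRing R] (n m : ℕ) {a b : Fin n} (hab : a ≠ b) (c : R) :
    GL (ExtIdx n m) R where
  val := extPow R n m (transvection a b c)
  inv := extPow R n m (transvection a b (-c))
  val_inv := by
    rw [extPow_transvection_eq, extPow_transvection_eq,
      one_add_smul_mul_one_add_smul (extNil_mul_self hab), add_neg_cancel, zero_smul, add_zero]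
  inv_val := by
    rw [extPow_transvection_eq, extPow_transvection_eq,
      one_add_smul_mul_one_add_smul (extNil_mul_self hab), neg_add_cancel, zero_smul, add_zero]

lemma extTransvection_mem_extElem {a b : Fin n} (hab : a ≠ b) (c : R) :
    extTransvection R n m hab c ∈ extElem R n m :=
  Subgroup.subset_closure ⟨a, b, hab, c, rfl⟩

lemma tGL_mem_of_sdiff_eq {H : Subgroup (GL (ExtIdx n m) R)} (hH : extElem R n m ≤ H)
    {a b : Fin n} {I I' J : ExtIdx n m} (hI : I.1 \ I'.1 = {b}) (hI' : I'.1 \ I.1 = {a})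
    (haJ : a ∉ J.1) (hIJ : I ≠ J) (hI'J : I' ≠ J) {ξ : R} (hξ : tGL R I J hIJ ξ ∈ H) (c : R) :
    tGL R I' J hI'J (c * ξ) ∈ H := by
  have hab : a ≠ b := by
    rintro rfl
    exact (mem_sdiff.mp (hI ▸ mem_singleton_self a)).2 (mem_sdiff.mp (hI' ▸ mem_singleton_self a)).1
  obtain ⟨μ, hμ⟩ := isUnit_extNil_apply (R := R) hI hI'
  set g := extTransvection R n m hab (↑μ⁻¹ * c)
  have hg : g ∈ H := hH (extTransvection_mem_extElem hab _)
  suffices h : tGL R I' J hI'J (c * ξ) = (tGL R I J hIJ ξ)⁻¹ * (g * tGL R I J hIJ ξ * g⁻¹) by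
    rw [h]
    exact mul_mem (inv_mem hξ) (mul_mem (mul_mem hg hξ) (inv_mem hg))
  ext : 1
  show transvection I' J (c * ξ) = transvection I J (-ξ) *
    (extPow R n m (transvection a b (↑μ⁻¹ * c)) * transvection I J ξ *
      extPow R n m (transvection a b (-(↑μ⁻¹ * c))))
  have hND := extNil_mul_single (R := R) hab hI hI' J ξ
  have hDN := single_mul_extNil (R := R) hab I haJ ξ
  have hEN := single_mul_extNil (R := R) hab I' haJ (extNil R n m a b I' I * ξ)
  have hNN := extNil_mul_self (R := R) (m := m) hab
  have hDD : single I J ξ * single I J ξ = 0 := single_mul_single_of_ne _ _ _ _ (Ne.symm hIJ) _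
  have hDE : single I J ξ * single I' J (extNil R n m a b I' I * ξ) = 0 :=
    single_mul_single_of_ne _ _ _ _ (Ne.symm hI'J) _
  rw [extPow_transvection_eq, extPow_transvection_eq, transvection, transvection, transvection,
    ← single_neg]
  simp only [mul_add, add_mul, mul_one, one_mul, smul_mul_assoc, mul_smul_comm, neg_mul,
    hND, hDN, hEN, hNN, hDD, hDE, smul_zero, neg_zero, add_zero]
  rw [← hμ, smul_single, smul_eq_mul, mul_mul_mul_comm, Units.inv_mul, one_mul]
  module

end Conjugation

/-- For a subgroup `H` of `GL_N(R)` containing `Λ^m E_n(R)` and distinct weights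
`I, J`, the set `A_{I,J} = {ξ ∈ R : t_{I,J}(ξ) ∈ H}` is an ideal of `R`. -/
theorem levelSet_isIdeal (R : Type) [CommRing R] (n m : ℕ)
    (hm1 : 1 ≤ m) (hnm : 3 * m ≤ n)
    (H : Subgroup (GL (ExtIdx n m) R)) (hH : extElem R n m ≤ H)
    (I J : ExtIdx n m) (hIJ : I ≠ J) :
    ∃ A : Ideal R, ∀ ξ : R, ξ ∈ A ↔ tGL R I J hIJ ξ ∈ H := by
  refine ⟨{ carrier := {ξ | tGL R I J hIJ ξ ∈ H}
            add_mem' := fun {x y} hx hy => by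
              rw [Set.mem_ofPred_eq, tGL_add]; exact mul_mem hx hy
            zero_mem' := by rw [Set.mem_ofPred_eq, tGL_zero]; exact one_mem H
            smul_mem' := fun c ξ hξ => ?_ }, fun _ => Iff.rfl⟩
  obtain ⟨b, hb⟩ := ExtIdx.sdiff_nonempty_of_ne hIJ.symm
  obtain ⟨hbI, hbJ⟩ := mem_sdiff.mp hb
  obtain ⟨a, haI, haJ⟩ := ExtIdx.exists_notMem_of_two_mul_lt (by omega) I J
  obtain ⟨hI, hI'⟩ := sdiff_swapIdx hbI haI
  have hI'J : swapIdx I b a hbI haI ≠ J := fun h => haJ (h ▸ mem_insert_self a _)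
  have hξ' : tGL R _ J hI'J ξ ∈ H := by
    simpa using tGL_mem_of_sdiff_eq hH hI hI' haJ hIJ hI'J hξ 1
  exact tGL_mem_of_sdiff_eq hH hI' hI hbJ hI'J hIJ hξ' c
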